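/- arXiv:1606.05100 — 8 statements merged into one kernel-verified Lean document; each statement's English description precedes it below -/
import Mathlib

section
/- Let G = {G_1,...,G_K} be a partition of {1,...,p} with each group of size at least 2, and suppose the covariance Σ satisfies Σ = A C Aᵀ + Γ where A_{ak} = 1 if a ∈ G_k and 0 otherwise, C is symmetric, and Γ is diagonal. If Δ(C) := min_{j<k}(C_{jj}+C_{kk}-2C_{jk}) > 0, then for every a, the set V(a) := {a' ≠ a : max_{c ≠ a,a'} |Σ_{ac} - Σ_{a'c}| = 0} equals G_{k(a)} \ {a}, where k(a) is the group containing a. In particular the partition G is determined by Σ. -/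
/-!
If `a` and `a'` lie in different groups `j ≠ k`, comparing their rows of `Σ` at a partner of `a`
and at a partner of `a'` (both exist because groups have size at least two) forces rows `j` and
`k` of `C` to agree on columns `j` and `k`. Then `Δ_{jk} + Δ_{kj} = 0`, contradicting `Δ(C) > 0`.
-/

open Finset

theorem exists_ne_of_two_le_card_fiber {α β : Type*} [Fintype α] [DecidableEq β] {g : α → β}
    {j : β} (h : 2 ≤ #{a | g a = j}) (x : α) : ∃ c, g c = j ∧ c ≠ x := by
  obtain ⟨c, hc, hcx⟩ := exists_mem_ne h x
  exact ⟨c, (mem_filter.mp hc).2, hcx⟩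

theorem Matrix.not_gap_pos_of_rows_eq {κ : Type*} (C : Matrix κ κ ℝ) {j k : κ}
    (hj : C j j = C k j) (hk : C j k = C k k) :
    ¬ (0 < C j j + C k k - 2 * C j k ∧ 0 < C k k + C j j - 2 * C k j) := by
  rintro ⟨hjk, hkj⟩
  linarith

theorem block_entry_eq_of_entry_eq {ι κ : Type*} {g : ι → κ} {C : Matrix κ κ ℝ}
    {S : Matrix ι ι ℝ} (hblock : ∀ a b : ι, a ≠ b → S a b = C (g a) (g b)) {a a' c : ι}
    (hca : c ≠ a) (hca' : c ≠ a') (h : S a c = S a' c) : C (g a) (g c) = C (g a') (g c) := by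
  rwa [hblock a c hca.symm, hblock a' c hca'.symm] at h

theorem stmt_2_general (p K : ℕ) (g : Fin p → Fin K)
    (hsize : ∀ j : Fin K, 2 ≤ (Finset.univ.filter (fun a => g a = j)).card)
    (C : Matrix (Fin K) (Fin K) ℝ)
    (S : Matrix (Fin p) (Fin p) ℝ)
    (hblock : ∀ a b : Fin p, a ≠ b → S a b = C (g a) (g b))
    (hΔ : ∀ j k : Fin K, j ≠ k → 0 < C j j + C k k - 2 * C j k) :
    ∀ a a' : Fin p, a' ≠ a →
      ((∀ c, c ≠ a → c ≠ a' → S a c = S a' c) ↔ g a' = g a) := by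
  intro a a' _
  constructor
  · intro hrows
    by_contra hg
    obtain ⟨c, hc, hca⟩ := exists_ne_of_two_le_card_fiber (hsize (g a)) a
    obtain ⟨d, hd, hda'⟩ := exists_ne_of_two_le_card_fiber (hsize (g a')) a'
    have hca' : c ≠ a' := by rintro rfl; exact hg hc
    have hda : d ≠ a := by rintro rfl; exact hg hd.symm
    have hcol_a := block_entry_eq_of_entry_eq hblock hca hca' (hrows c hca hca')
    have hcol_a' := block_entry_eq_of_entry_eq hblock hda hda' (hrows d hda hda')
    rw [hc] at hcol_a
    rw [hd] at hcol_a'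
    exact C.not_gap_pos_of_rows_eq hcol_a hcol_a' ⟨hΔ _ _ (Ne.symm hg), hΔ _ _ hg⟩
  · intro hg c hca hca'
    rw [hblock a c hca.symm, hblock a' c hca'.symm, hg]

/-- In a G-block covariance model with all groups of size ≥ 2 and Δ(C) > 0,
for each a the set V(a) = {a' ≠ a : max_{c ≠ a,a'} |Σ_ac − Σ_a'c| = 0} equals
G_{k(a)} \ {a}; hence the partition is identifiable from Σ. -/
theorem stmt_2 (p K : ℕ) (g : Fin p → Fin K)
    (hsize : ∀ j : Fin K, 2 ≤ (Finset.univ.filter (fun a => g a = j)).card)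
    (C : Matrix (Fin K) (Fin K) ℝ) (hCsym : C.IsSymm)
    (S : Matrix (Fin p) (Fin p) ℝ)
    (hblock : ∀ a b : Fin p, a ≠ b → S a b = C (g a) (g b))
    (hΔ : ∀ j k : Fin K, j ≠ k → 0 < C j j + C k k - 2 * C j k) :
    ∀ a a' : Fin p, a' ≠ a →
      ((∀ c, c ≠ a → c ≠ a' → S a c = S a' c) ↔ g a' = g a) :=
  stmt_2_general p K g hsize C S hblock hΔ
end

section
/- Let B* be the p×p matrix with B*_{ab} = 1/|G_k| if a,b belong to the same group G_k of a partition G = {G_1,...,G_K} of {1,...,p}, and B*_{ab} = 0 otherwise. Let 𝒞 be the set of p×p matrices B that are symmetric positive semidefinite, have all entries nonnegative, have every row summing to 1, and have trace K. Then the only matrix in 𝒞 whose support is contained in the support of B* is B* itself. -/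
open Finset Matrix

/-- The normalized partnership matrix of the partition given by assignment `g`. -/
noncomputable def Bstar (p K : ℕ) (g : Fin p → Fin K) : Matrix (Fin p) (Fin p) ℝ :=
  fun a b => if g a = g b then ((Finset.univ.filter (fun c => g c = g a)).card : ℝ)⁻¹ else 0

/-- The convex set 𝒞: symmetric PSD matrices with nonnegative entries,
all row sums 1, and trace K. -/
def memC (p K : ℕ) (B : Matrix (Fin p) (Fin p) ℝ) : Prop :=
  B.PosSemidef ∧ (∀ a b, 0 ≤ B a b) ∧ (∀ a, ∑ b, B a b = 1) ∧ B.trace = (K : ℝ)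

/-!
`B*` is the orthogonal projection `S` onto the block-constant vectors. A symmetric `B` with unit
row sums supported in the blocks satisfies `B * S = S = S * B`, so
`B - S = (1 - S)ᴴ * B * (1 - S)` is positive semidefinite; when `tr B = K = tr S` its trace
vanishes, which forces `B = S`.
-/

namespace Matrix

open scoped ComplexOrder

variable {n 𝕜 : Type*} [Fintype n] [DecidableEq n] [RCLike 𝕜]

lemma PosSemidef.eq_of_mul_eq_of_trace_eq {B S : Matrix n n 𝕜} (hB : B.PosSemidef)
    (hS : IsStarProjection S) (hBS : B * S = S) (htr : B.trace = S.trace) : B = S := by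
  have hSB : S * B = S := by
    have h := congr_arg star hBS
    rwa [star_mul, hS.isSelfAdjoint.star_eq, star_eq_conjTranspose, hB.isHermitian.eq] at h
  have hconj : (1 - S)ᴴ * B * (1 - S) = B - S := by
    have hexp : (1 - S) * B * (1 - S) = B - S * B - B * S + S * B * S := by noncomm_ring
    rw [conjTranspose_sub, conjTranspose_one, ← star_eq_conjTranspose, hS.isSelfAdjoint.star_eq,
      hexp, hSB, hBS, hS.isIdempotentElem.eq]
    abel
  have hpsd : (B - S).PosSemidef := hconj ▸ hB.conjTranspose_mul_mul_same (1 - S)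
  exact sub_eq_zero.mp (hpsd.trace_eq_zero_iff.mp (by rw [trace_sub, htr, sub_self]))

end Matrix

section Bstar

variable {p K : ℕ} {g : Fin p → Fin K}

lemma Bstar_apply_eq_ite (a b : Fin p) :
    Bstar p K g a b = if g a = g b then ((univ.filter (fun c => g c = g b)).card : ℝ)⁻¹ else 0 := by
  unfold Bstar
  split_ifs with h
  · rw [h]
  · rfl

lemma Bstar_apply_of_ne {a b : Fin p} (h : g a ≠ g b) : Bstar p K g a b = 0 := if_neg h

lemma Bstar_nonneg (a b : Fin p) : 0 ≤ Bstar p K g a b := by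
  unfold Bstar
  split_ifs <;> positivity

lemma Bstar_symm (a b : Fin p) : Bstar p K g a b = Bstar p K g b a := by
  rw [Bstar_apply_eq_ite, Bstar]
  simp only [eq_comm (a := g a)]

lemma isHermitian_Bstar : (Bstar p K g).IsHermitian := by
  ext a b
  exact Bstar_symm b a

lemma card_fiber_pos (a : Fin p) : 0 < ((univ.filter (fun c => g c = g a)).card : ℝ) := by
  exact_mod_cast card_pos.2 ⟨a, by simp⟩

lemma sum_fiber_eq_ite {B : Matrix (Fin p) (Fin p) ℝ} (hrow : ∀ a, ∑ b, B a b = 1)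
    (hsupp : ∀ a b, g a ≠ g b → B a b = 0) (a : Fin p) (k : Fin K) :
    ∑ c ∈ univ.filter (fun c => g c = k), B a c = if g a = k then 1 else 0 := by
  split_ifs with h
  · rw [← hrow a]
    refine sum_subset (filter_subset _ _) fun c _ hc => hsupp a c ?_
    simp_all [eq_comm]
  · exact sum_eq_zero fun c hc => hsupp a c (by simp_all)

lemma mul_Bstar {B : Matrix (Fin p) (Fin p) ℝ} (hrow : ∀ a, ∑ b, B a b = 1)
    (hsupp : ∀ a b, g a ≠ g b → B a b = 0) : B * Bstar p K g = Bstar p K g := by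
  ext a b
  simp only [mul_apply, Bstar_apply_eq_ite, mul_ite, mul_zero]
  rw [← sum_filter, ← sum_mul, sum_fiber_eq_ite hrow hsupp, ite_mul, one_mul, zero_mul]

lemma sum_Bstar_row (a : Fin p) : ∑ b, Bstar p K g a b = 1 := by
  simp only [Bstar, ← sum_filter, sum_const, nsmul_eq_mul, eq_comm (a := g a)]
  exact mul_inv_cancel₀ (card_fiber_pos a).ne'

lemma isStarProjection_Bstar : IsStarProjection (Bstar p K g) :=
  ⟨mul_Bstar sum_Bstar_row fun _ _ => Bstar_apply_of_ne, isHermitian_Bstar⟩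

lemma posSemidef_Bstar : (Bstar p K g).PosSemidef := by
  have h := posSemidef_conjTranspose_mul_self (Bstar p K g)
  rwa [isHermitian_Bstar.eq, isStarProjection_Bstar.isIdempotentElem.eq] at h

lemma trace_Bstar (hg : Function.Surjective g) : (Bstar p K g).trace = K := by
  have hdiag : ∀ a, Bstar p K g a a = ((univ.filter (fun c => g c = g a)).card : ℝ)⁻¹ :=
    fun a => if_pos rfl
  rw [trace, ← sum_fiberwise univ g]
  simp only [diag_apply, hdiag]
  calc ∑ k, ∑ a ∈ univ.filter (fun a => g a = k), ((univ.filter (fun c => g c = g a)).card : ℝ)⁻¹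
      = ∑ _k : Fin K, (1 : ℝ) := sum_congr rfl fun k _ => ?_
    _ = K := by simp
  obtain ⟨a, rfl⟩ := hg k
  rw [sum_congr rfl fun b hb => by rw [(mem_filter.1 hb).2], sum_const, nsmul_eq_mul]
  exact mul_inv_cancel₀ (card_fiber_pos a).ne'

lemma memC_Bstar (hg : Function.Surjective g) : memC p K (Bstar p K g) :=
  ⟨posSemidef_Bstar, Bstar_nonneg, sum_Bstar_row, trace_Bstar hg⟩

end Bstar

/-- the only matrix in 𝒞 supported in supp(B*) is B* itself. -/
theorem stmt_3 (p K : ℕ) (g : Fin p → Fin K) (hg : Function.Surjective g) :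
    {B : Matrix (Fin p) (Fin p) ℝ |
        memC p K B ∧ ∀ a b, Bstar p K g a b = 0 → B a b = 0}
      = {Bstar p K g} := by
  ext B
  constructor
  · rintro ⟨⟨hpsd, -, hrow, htr⟩, hsupp⟩
    refine hpsd.eq_of_mul_eq_of_trace_eq isStarProjection_Bstar
      (mul_Bstar hrow fun a b h => hsupp a b (Bstar_apply_of_ne h)) ?_
    rw [htr, trace_Bstar hg]
  · rintro rfl
    exact ⟨memC_Bstar hg, fun _ _ => id⟩
end

section
/- Let G = {G_1,...,G_K} be a partition of {1,...,p} with minimal group size m, let B* be the associated normalized partnership matrix (B*_{ab} = 1/|G_k| if a,b ∈ G_k, else 0), and let Γ be a diagonal p×p matrix with Γ_{aa} = γ_k for all a ∈ G_k. Then for any matrix B in the set 𝒞 (symmetric PSD, nonnegative entries, row sums 1, trace K), ⟨Γ, B* − B⟩ ≥ −((max_k γ_k − min_k γ_k)/m) · Σ_{j ≠ k} |B_{G_j G_k}|_1, where |B_{G_j G_k}|_1 = Σ_{a ∈ G_j, b ∈ G_k} |B_{ab}|. -/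
/-!
Write `n_j = |G_j|`, `t_j = Σ_{a ∈ G_j} B_aa` and `o_j = Σ_{a ∈ G_j, b ∉ G_j} B_ab`. Then
`⟨Γ, B* − B⟩ = Σ_j γ_j (1 − t_j)` and `Σ_j (1 − t_j) = K − tr B = 0`. Positive semidefiniteness
gives `2 B_ab ≤ B_aa + B_bb`; summed over `G_j × G_j`, and with row sums `1`, this says
`n_j − o_j ≤ n_j t_j`, i.e. `1 − t_j ≤ o_j / n_j ≤ o_j / m`. Subtracting `γmax Σ_j (1 − t_j) = 0`,
each term `(γ_j − γmax)(1 − t_j)` is at least `−(γmax − γmin) o_j / m`.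
-/

open Finset

theorem Matrix.PosSemidef.two_mul_apply_le {ι : Type*} {B : Matrix ι ι ℝ} (hB : B.PosSemidef)
    (a b : ι) : 2 * B a b ≤ B a a + B b b := by
  have hsymm : B b a = B a b := by simpa using congrFun (congrFun hB.isHermitian a) b
  have hquad : 0 ≤ B a a + -B a b + (B b b + -B b a) := by
    simpa [dotProduct, Matrix.mulVec, Fin.sum_univ_two] using
      (hB.submatrix ![a, b]).dotProduct_mulVec_nonneg ![1, -1]
  linarith

theorem Matrix.PosSemidef.sum_sum_le_card_mul_sum_diag {ι : Type*} {B : Matrix ι ι ℝ}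
    (hB : B.PosSemidef) (s : Finset ι) :
    ∑ a ∈ s, ∑ b ∈ s, B a b ≤ #s * ∑ a ∈ s, B a a := by
  have h : ∑ a ∈ s, ∑ b ∈ s, 2 * B a b ≤ ∑ a ∈ s, ∑ b ∈ s, (B a a + B b b) :=
    sum_le_sum fun a _ => sum_le_sum fun b _ => hB.two_mul_apply_le a b
  simp only [sum_add_distrib, sum_const, ← mul_sum, nsmul_eq_mul] at h
  linarith

section RowStochastic

variable {ι : Type*} [Fintype ι] [DecidableEq ι] {B : Matrix ι ι ℝ}

theorem sum_sum_compl_eq_card_sub (hrow : ∀ a, ∑ b, B a b = 1) (s : Finset ι) :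
    ∑ a ∈ s, ∑ b ∈ sᶜ, B a b = #s - ∑ a ∈ s, ∑ b ∈ s, B a b := by
  rw [eq_sub_iff_add_eq, ← sum_add_distrib, card_eq_sum_ones, Nat.cast_sum]
  refine sum_congr rfl fun a _ => ?_
  rw [add_comm, sum_add_sum_compl, hrow, Nat.cast_one]

theorem one_sub_sum_diag_le (hB : B.PosSemidef) (hrow : ∀ a, ∑ b, B a b = 1)
    {s : Finset ι} (hs : s.Nonempty) :
    1 - ∑ a ∈ s, B a a ≤ (∑ a ∈ s, ∑ b ∈ sᶜ, B a b) / #s := by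
  have hcard : (0 : ℝ) < #s := by exact_mod_cast hs.card_pos
  rw [le_div_iff₀ hcard, sum_sum_compl_eq_card_sub hrow]
  linarith [hB.sum_sum_le_card_mul_sum_diag s]

end RowStochastic

theorem neg_mul_sum_le_sum_mul_of_sum_eq_zero {κ : Type*} [Fintype κ] {γ d e : κ → ℝ}
    {lo hi : ℝ} (hlo : ∀ j, lo ≤ γ j) (hhi : ∀ j, γ j ≤ hi) (hd : ∑ j, d j = 0)
    (hde : ∀ j, d j ≤ e j) (he : ∀ j, 0 ≤ e j) :
    -((hi - lo) * ∑ j, e j) ≤ ∑ j, γ j * d j := by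
  calc -((hi - lo) * ∑ j, e j) = ∑ j, (lo - hi) * e j := by
        rw [mul_sum, ← sum_neg_distrib]
        simp only [neg_mul_eq_neg_mul, neg_sub]
    _ ≤ ∑ j, (γ j - hi) * e j := sum_le_sum fun j _ => by nlinarith [hlo j, he j]
    _ ≤ ∑ j, (γ j - hi) * d j := sum_le_sum fun j _ => by nlinarith [hhi j, hde j]
    _ = ∑ j, γ j * d j := by
        simp only [sub_mul, sum_sub_distrib, ← mul_sum, hd, mul_zero, sub_zero]

section Partition

variable {ι κ : Type*} [Fintype ι] [DecidableEq ι] [Fintype κ] [DecidableEq κ]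

theorem sum_ite_ne_abs_eq_sum_sum_compl {B : Matrix ι ι ℝ} (hnn : ∀ a b, 0 ≤ B a b)
    (g : ι → κ) :
    (∑ a, ∑ b, if g a ≠ g b then |B a b| else 0) =
      ∑ j, ∑ a with g a = j, ∑ b ∈ (univ.filter fun b => g b = j)ᶜ, B a b := by
  rw [← sum_fiberwise univ g]
  refine sum_congr rfl fun j _ => sum_congr rfl fun a ha => ?_
  rw [(mem_filter.mp ha).2, compl_filter, sum_filter]
  exact sum_congr rfl fun b _ => by simp [abs_of_nonneg (hnn a b), eq_comm]

end Partition

theorem sum_diagonal_mul_Bstar_sub {p K : ℕ} {g : Fin p → Fin K} (hg : Function.Surjective g)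
    (γ : Fin K → ℝ) (B : Matrix (Fin p) (Fin p) ℝ) :
    ∑ a, ∑ b, Matrix.diagonal (fun c => γ (g c)) a b * (Bstar p K g - B) a b =
      ∑ j, γ j * (1 - ∑ a with g a = j, B a a) := by
  simp only [Matrix.diagonal_apply, ite_mul, zero_mul, sum_ite_eq, mem_univ, if_true]
  rw [← sum_fiberwise univ g]
  refine sum_congr rfl fun j _ => ?_
  obtain ⟨a₀, rfl⟩ := hg j
  have hmem : a₀ ∈ univ.filter fun c => g c = g a₀ := by simp
  have hcard : (#{c | g c = g a₀} : ℝ) ≠ 0 := by exact_mod_cast (card_pos.mpr ⟨a₀, hmem⟩).ne'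
  calc ∑ a with g a = g a₀, γ (g a) * (Bstar p K g - B) a a
      = ∑ a with g a = g a₀, γ (g a₀) * ((#{c | g c = g a₀} : ℝ)⁻¹ - B a a) :=
        sum_congr rfl fun a ha => by
          rw [(mem_filter.mp ha).2, Matrix.sub_apply, Bstar, if_pos rfl, (mem_filter.mp ha).2]
    _ = γ (g a₀) * (1 - ∑ a with g a = g a₀, B a a) := by
        rw [← mul_sum, sum_sub_distrib, sum_const, nsmul_eq_mul, mul_inv_cancel₀ hcard]

/-- ⟨Γ, B* − B⟩ ≥ −(|Γ|_V/m)·Σ_{j≠k}|B_{G_jG_k}|₁ for B ∈ 𝒞, where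
m is the minimal group size and |Γ|_V = max γ − min γ. -/
theorem stmt_5 (p K : ℕ) (g : Fin p → Fin K) (hg : Function.Surjective g)
    (γ : Fin K → ℝ)
    (m : ℕ)
    (hm : IsLeast {n : ℕ | ∃ j, n = (Finset.univ.filter (fun a => g a = j)).card} m)
    (γmax γmin : ℝ)
    (hmax : IsGreatest (Set.range γ) γmax) (hmin : IsLeast (Set.range γ) γmin)
    (B : Matrix (Fin p) (Fin p) ℝ) (hB : memC p K B) :
    -(((γmax - γmin) / (m : ℝ)) * ∑ a, ∑ b, if g a ≠ g b then |B a b| else 0)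
      ≤ ∑ a, ∑ b,
          (Matrix.diagonal (fun c => γ (g c))) a b * ((Bstar p K g - B) a b) := by
  obtain ⟨hpsd, hnn, hrow, htr⟩ := hB
  have hfib : ∀ j, (univ.filter fun a => g a = j).Nonempty := fun j =>
    (hg j).imp fun a ha => mem_filter.mpr ⟨mem_univ a, ha⟩
  have hm_pos : (0 : ℝ) < m := by
    obtain ⟨j, hj⟩ := hm.1
    exact_mod_cast hj ▸ (hfib j).card_pos
  have hoff : ∀ j, 0 ≤ ∑ a with g a = j, ∑ b ∈ (univ.filter fun b => g b = j)ᶜ, B a b :=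
    fun j => sum_nonneg fun a _ => sum_nonneg fun b _ => hnn a b
  rw [sum_ite_ne_abs_eq_sum_sum_compl hnn, sum_diagonal_mul_Bstar_sub hg, div_mul_eq_mul_div,
    mul_div_assoc, sum_div]
  refine neg_mul_sum_le_sum_mul_of_sum_eq_zero (fun j => hmin.2 ⟨j, rfl⟩)
    (fun j => hmax.2 ⟨j, rfl⟩) ?_ (fun j => ?_) (fun j => ?_)
  · rw [sum_sub_distrib, sum_fiberwise univ g fun a => B a a]
    simp [← htr, Matrix.trace]
  · exact (one_sub_sum_diag_le hpsd hrow (hfib j)).trans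
      (div_le_div_of_nonneg_left (hoff j) hm_pos (by exact_mod_cast hm.2 ⟨j, rfl⟩))
  · exact div_nonneg (hoff j) hm_pos.le
end

section
/- For any B in 𝒞 (symmetric PSD p×p, nonnegative entries, row sums 1, trace K) and B* the normalized partnership matrix of a partition G, the matrix (I − B*)B(I − B*) is PSD and its nuclear norm satisfies ‖(I−B*)B(I−B*)‖_* = ⟨I − B*, B⟩ = tr(B) − K + Σ_{k≠j} Σ_{a∈G_k, b∈G_j} B_{ab}/|G_k| ≤ tr(B) − K + (1/m) Σ_{k≠j}|B_{G_jG_k}|_1. -/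
/-!
Since `B*` is symmetric and idempotent, so is `I - B*`; hence `(I - B*) B (I - B*)` is a congruence
of the PSD matrix `B`, and by cyclicity its trace is `tr((I - B*) B) = ⟨I - B*, B⟩`. Within row `a`
the entries of `B*` all equal `1 / |G(a)|`, so the row-sum condition gives
`Σ_b B*_{ab} B_{ab} = (1 - Σ_{b ∉ G(a)} B_{ab}) / |G(a)|`, and `Σ_a 1 / |G(a)| = K` counts the groups.
The bound uses `|G(a)| ≥ m` on each cross term.
-/

open Finset Matrix

theorem Matrix.trace_mul_mul_eq_sum_mul_of_isIdempotentElem {n R : Type*} [Fintype n]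
    [CommSemiring R] {Q B : Matrix n n R} (hQ : IsIdempotentElem Q) (hB : Bᵀ = B) :
    (Q * B * Q).trace = ∑ a, ∑ b, Q a b * B a b := by
  rw [trace_mul_cycle, hQ.eq]
  conv_lhs => rw [← hB]
  rw [← sum_hadamard_eq]
  rfl

section Fibers

variable {ι κ : Type*} [Fintype ι] [DecidableEq κ]

theorem card_filter_fiber_pos (g : ι → κ) (a : ι) : 0 < #{c | g c = g a} :=
  card_pos.mpr ⟨a, mem_filter.mpr ⟨mem_univ a, rfl⟩⟩

theorem sum_inv_card_fiber_eq_card {R : Type*} [DivisionRing R] [CharZero R] [Fintype κ]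
    {g : ι → κ} (hg : Function.Surjective g) :
    ∑ a, (#{c | g c = g a} : R)⁻¹ = Fintype.card κ := by
  rw [← sum_fiberwise univ g, Fintype.card_eq_sum_ones, Nat.cast_sum]
  refine sum_congr rfl fun j _ => ?_
  obtain ⟨a, rfl⟩ := hg j
  have hfiber : ∀ b ∈ ({b | g b = g a} : Finset ι),
      (#{c | g c = g b} : R)⁻¹ = (#{c | g c = g a} : R)⁻¹ := by
    intro b hb
    rw [(mem_filter.mp hb).2]
  rw [sum_congr rfl hfiber, sum_const, nsmul_eq_mul, Nat.cast_one,
    mul_inv_cancel₀ (by exact_mod_cast (card_filter_fiber_pos g a).ne')]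

theorem sum_ite_ne_div_card_fiber_le (B : ι → ι → ℝ) (g : ι → κ) {m : ℕ} (hm : 0 < m)
    (hle : ∀ a, m ≤ #{c | g c = g a}) :
    ∑ a, ∑ b, (if g a ≠ g b then B a b / #{c | g c = g a} else 0)
      ≤ 1 / (m : ℝ) * ∑ a, ∑ b, if g a ≠ g b then |B a b| else 0 := by
  simp only [mul_sum, mul_ite, mul_zero, one_div_mul_eq_div]
  gcongr with a _ b _
  split_ifs
  · calc B a b / #{c | g c = g a} ≤ |B a b| / #{c | g c = g a} := by
          gcongr; exact le_abs_self _
      _ ≤ |B a b| / m := by gcongr; exact hle a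
  · rfl

end Fibers

section Bstar

variable {p K : ℕ} (g : Fin p → Fin K)

theorem Bstar_transpose : (Bstar p K g)ᵀ = Bstar p K g := by
  ext a b
  simp only [transpose_apply, Bstar]
  by_cases h : g a = g b
  · simp [h]
  · simp [h, Ne.symm h]

theorem Bstar_mul_self : Bstar p K g * Bstar p K g = Bstar p K g := by
  ext a b
  set n : ℝ := ((#{c | g c = g a} : ℕ) : ℝ) with hn_def
  have hterm : ∀ c, Bstar p K g a c * Bstar p K g c b
      = if g c = g a then (if g a = g b then n⁻¹ * n⁻¹ else 0) else 0 := by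
    intro c
    by_cases hc : g c = g a
    · simp [Bstar, n, hc]
    · simp [Bstar, hc, Ne.symm hc]
  have hn : n ≠ 0 := by rw [hn_def]; exact_mod_cast (card_filter_fiber_pos g a).ne'
  rw [mul_apply, sum_congr rfl fun c _ => hterm c, ← sum_filter, sum_const, nsmul_eq_mul]
  simp only [Bstar]
  split_ifs
  · rw [← hn_def]
    field_simp
  · simp

theorem isIdempotentElem_one_sub_Bstar : IsIdempotentElem (1 - Bstar p K g) :=
  IsIdempotentElem.one_sub (Bstar_mul_self g)

theorem sum_Bstar_mul_add_sum_ite_ne {B : Matrix (Fin p) (Fin p) ℝ} (hrow : ∀ a, ∑ b, B a b = 1)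
    (a : Fin p) :
    ∑ b, Bstar p K g a b * B a b
      + ∑ b, (if g a ≠ g b then B a b / #{c | g c = g a} else 0)
      = (#{c | g c = g a} : ℝ)⁻¹ := by
  rw [← sum_add_distrib, ← mul_one (_⁻¹ : ℝ), ← hrow a, mul_sum]
  refine sum_congr rfl fun b _ => ?_
  by_cases h : g a = g b <;> simp [Bstar, h, div_eq_inv_mul]

theorem sum_one_sub_Bstar_mul_eq (hg : Function.Surjective g) {B : Matrix (Fin p) (Fin p) ℝ}
    (hrow : ∀ a, ∑ b, B a b = 1) :
    ∑ a, ∑ b, (1 - Bstar p K g) a b * B a b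
      = B.trace - K + ∑ a, ∑ b,
          (if g a ≠ g b then B a b / #{c | g c = g a} else 0) := by
  have hdiag : ∑ a, ∑ b, (1 : Matrix (Fin p) (Fin p) ℝ) a b * B a b = B.trace := by
    simp [one_apply, trace]
  have hK : ∑ a, ∑ b, Bstar p K g a b * B a b
      = K - ∑ a, ∑ b, (if g a ≠ g b then B a b / #{c | g c = g a} else 0) := by
    rw [eq_sub_iff_add_eq, ← sum_add_distrib, sum_congr rfl fun a _ => sum_Bstar_mul_add_sum_ite_ne g hrow a,
      sum_inv_card_fiber_eq_card hg, Fintype.card_fin]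
  simp only [Matrix.sub_apply, sub_mul, sum_sub_distrib, hdiag, hK]
  ring

end Bstar

/-- for B ∈ 𝒞, the matrix (I−B*)B(I−B*) is PSD and its nuclear norm
(= its trace, being PSD) equals ⟨I−B*,B⟩ = tr(B) − K + Σ_{k≠j}Σ_{a∈G_k,b∈G_j} B_ab/|G_k|,
which is at most tr(B) − K + (1/m)Σ_{k≠j}|B_{G_jG_k}|₁. -/
theorem stmt_8 (p K : ℕ) (g : Fin p → Fin K) (hg : Function.Surjective g)
    (m : ℕ)
    (hm : IsLeast {n : ℕ | ∃ j, n = (Finset.univ.filter (fun a => g a = j)).card} m)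
    (B : Matrix (Fin p) (Fin p) ℝ) (hB : memC p K B) :
    ((1 - Bstar p K g) * B * (1 - Bstar p K g)).PosSemidef ∧
    ((1 - Bstar p K g) * B * (1 - Bstar p K g)).trace
      = ∑ a, ∑ b, (1 - Bstar p K g) a b * B a b ∧
    (∑ a, ∑ b, (1 - Bstar p K g) a b * B a b)
      = B.trace - (K : ℝ) + ∑ a, ∑ b,
          (if g a ≠ g b then
            B a b / ((Finset.univ.filter (fun c => g c = g a)).card : ℝ) else 0) ∧
    (∑ a, ∑ b, (1 - Bstar p K g) a b * B a b)
      ≤ B.trace - (K : ℝ)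
          + (1 / (m : ℝ)) * ∑ a, ∑ b, if g a ≠ g b then |B a b| else 0 := by
  obtain ⟨hPSD, -, hrow, -⟩ := hB
  have hQ : (1 - Bstar p K g)ᴴ = 1 - Bstar p K g := by
    rw [conjTranspose_eq_transpose_of_trivial, transpose_sub, transpose_one, Bstar_transpose]
  have hm_pos : 0 < m := by
    obtain ⟨j, rfl⟩ := hm.1
    obtain ⟨a, rfl⟩ := hg j
    exact card_filter_fiber_pos g a
  have hinner := sum_one_sub_Bstar_mul_eq g hg hrow
  refine ⟨?_, ?_, hinner, ?_⟩
  · have := hPSD.mul_mul_conjTranspose_same (1 - Bstar p K g)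
    rwa [hQ] at this
  · exact trace_mul_mul_eq_sum_mul_of_isIdempotentElem (isIdempotentElem_one_sub_Bstar g)
      (by simpa only [conjTranspose_eq_transpose_of_trivial] using hPSD.isHermitian.eq)
  · rw [hinner]
    gcongr
    exact sum_ite_ne_div_card_fiber_le B g hm_pos fun a => hm.2 ⟨g a, rfl⟩
end

section
/- Let B* be the normalized partnership matrix of a partition G of {1,...,p} and let B be a p×p matrix with nonnegative entries and row sums equal to 1. Then the entrywise ℓ1 norm |B*(I − B)|_1 = 2 Σ_{j≠k} |B_{G_jG_k}|_1. -/
open Finset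

/- Column by column: the `b`-th column `u` of `B*(I - B)` has total sum zero, because `B*`
preserves the sum over each group and the columns of `I - B` sum to zero. Moreover `u` is
nonnegative on the group of `b` and nonpositive off it, so its ℓ1 norm is twice its sum over the
group of `b`, which equals the sum of `(I - B) c b` over that group, i.e. the mass of column `b`
of `B` lying outside the group of `b`. -/

theorem sum_abs_eq_two_nsmul_sum_filter {ι α : Type*} [AddCommGroup α] [LinearOrder α]
    [IsOrderedAddMonoid α] (s : Finset ι) (P : ι → Prop) [DecidablePred P] (u : ι → α)
    (hsum : ∑ i ∈ s, u i = 0) (hpos : ∀ i ∈ s, P i → 0 ≤ u i)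
    (hneg : ∀ i ∈ s, ¬ P i → u i ≤ 0) :
    ∑ i ∈ s, |u i| = 2 • ∑ i ∈ s with P i, u i := by
  have hsplit := sum_filter_add_sum_filter_not s P u
  rw [← sum_filter_add_sum_filter_not s P, two_nsmul,
    sum_congr rfl fun i hi => abs_of_nonneg (hpos i (mem_filter.1 hi).1 (mem_filter.1 hi).2),
    sum_congr rfl fun i hi => abs_of_nonpos (hneg i (mem_filter.1 hi).1 (mem_filter.1 hi).2),
    sum_neg_distrib]
  rw [hsum] at hsplit
  rw [eq_neg_of_add_eq_zero_right hsplit, neg_neg]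

section Bstar

variable {p K : ℕ} (g : Fin p → Fin K)

theorem Bstar_mul_apply {n : Type*} [Fintype n] (M : Matrix (Fin p) n ℝ) (a : Fin p) (b : n) :
    (Bstar p K g * M) a b = (#{c | g c = g a} : ℝ)⁻¹ * ∑ c with g c = g a, M c b := by
  simp only [Matrix.mul_apply, Bstar, ite_mul, zero_mul, eq_comm (a := g a), ← sum_filter,
    mul_sum]

theorem sum_fiber_Bstar_mul_apply {n : Type*} [Fintype n] (M : Matrix (Fin p) n ℝ) (k : Fin K)
    (b : n) : ∑ a with g a = k, (Bstar p K g * M) a b = ∑ c with g c = k, M c b := by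
  rw [sum_congr rfl fun a ha => by rw [Bstar_mul_apply, (mem_filter.1 ha).2], sum_const,
    nsmul_eq_mul]
  rcases eq_or_ne #{c | g c = k} 0 with hk | hk
  · simp [card_eq_zero.1 hk]
  · field_simp

theorem sum_Bstar_mul_apply {n : Type*} [Fintype n] (M : Matrix (Fin p) n ℝ) (b : n) :
    ∑ a, (Bstar p K g * M) a b = ∑ c, M c b := by
  rw [← sum_fiberwise univ g, ← sum_fiberwise univ g]
  exact sum_congr rfl fun k _ => sum_fiber_Bstar_mul_apply g M k b

theorem sum_fiber_one_sub_apply (B : Matrix (Fin p) (Fin p) ℝ) (k : Fin K) (b : Fin p) :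
    ∑ c with g c = k, (1 - B) c b = (if g b = k then 1 else 0) - ∑ c with g c = k, B c b := by
  simp [Matrix.sub_apply, Matrix.one_apply, sum_sub_distrib]

theorem sum_abs_Bstar_mul_one_sub_apply (B : Matrix (Fin p) (Fin p) ℝ)
    (hpos : ∀ a b, 0 ≤ B a b) (hsum : ∀ b, ∑ a, B a b = 1) (b : Fin p) :
    ∑ a, |(Bstar p K g * (1 - B)) a b| = 2 * ∑ c, if g c ≠ g b then |B c b| else 0 := by
  have hfiber_le : ∑ c with g c = g b, B c b ≤ 1 :=
    hsum b ▸ sum_le_univ_sum_of_nonneg fun c => hpos c b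
  have hfiber_nonneg (k : Fin K) : 0 ≤ ∑ c with g c = k, B c b :=
    sum_nonneg fun c _ => hpos c b
  have hcol_zero : ∑ a, (Bstar p K g * (1 - B)) a b = 0 := by
    simp [sum_Bstar_mul_apply, Matrix.sub_apply, Matrix.one_apply, sum_sub_distrib, hsum]
  rw [sum_abs_eq_two_nsmul_sum_filter univ (fun a => g a = g b) _ hcol_zero, two_nsmul, ← two_mul,
    sum_fiber_Bstar_mul_apply, sum_fiber_one_sub_apply, if_pos rfl]
  · rw [← hsum b, ← sum_filter_add_sum_filter_not univ (fun c => g c = g b), add_sub_cancel_left,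
      sum_filter]
    exact congrArg _ (sum_congr rfl fun c _ => by rw [abs_of_nonneg (hpos c b)])
  · intro a _ ha
    rw [Bstar_mul_apply, sum_fiber_one_sub_apply, if_pos ha.symm, ha]
    exact mul_nonneg (by positivity) (sub_nonneg.2 hfiber_le)
  · intro a _ ha
    rw [Bstar_mul_apply, sum_fiber_one_sub_apply, if_neg (Ne.symm ha), zero_sub]
    exact mul_nonpos_of_nonneg_of_nonpos (by positivity) (neg_nonpos.2 (hfiber_nonneg _))

end Bstar

theorem stmt_9_general (p K : ℕ) (g : Fin p → Fin K)
    (B : Matrix (Fin p) (Fin p) ℝ)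
    (hpos : ∀ a b, 0 ≤ B a b)
    (hsum : ∀ b, ∑ a, B a b = 1) :
    ∑ a, ∑ b, |(Bstar p K g * (1 - B)) a b|
      = 2 * ∑ a, ∑ b, if g a ≠ g b then |B a b| else 0 := by
  rw [sum_comm, sum_comm (f := fun a b => if g a ≠ g b then |B a b| else 0), mul_sum]
  exact sum_congr rfl fun b _ => sum_abs_Bstar_mul_one_sub_apply g B hpos hsum b

/-- if B has nonnegative entries and B1 = 1, then
|B*(I − B)|₁ = 2 Σ_{j≠k} |B_{G_jG_k}|₁. -/
theorem stmt_9 (p K : ℕ) (g : Fin p → Fin K) (hg : Function.Surjective g)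
    (B : Matrix (Fin p) (Fin p) ℝ)
    (hpos : ∀ a b, 0 ≤ B a b)
    (hsum : ∀ b, ∑ a, B a b = 1) :
    ∑ a, ∑ b, |(Bstar p K g * (1 - B)) a b|
      = 2 * ∑ a, ∑ b, if g a ≠ g b then |B a b| else 0 :=
  stmt_9_general p K g B hpos hsum
end

section
/- Let B be a symmetric positive semidefinite p×p matrix with nonnegative entries and all row sums equal to 1, and let G = {G_1,...,G_K} be a partition with minimal group size m. Then (1/m) Σ_{j≠k} |B_{G_jG_k}|_1 + tr(B) − K ≥ 0. -/
/-!
Within a group `G`, positive semidefiniteness gives `2 B_ab ≤ B_aa + B_bb`, hence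
`1ᵀ B_GG 1 ≤ |G| tr B_GG`, while the unit row sums give `1ᵀ B_GG 1 = |G| - |B_{G,Gᶜ}|₁`.
So `|G| (1 - tr B_GG) ≤ |B_{G,Gᶜ}|₁`; dividing by `m ≤ |G|` and summing over the `K` groups
gives the claim.
-/

open Finset

namespace Matrix

variable {n : Type*} [Fintype n] {B : Matrix n n ℝ}

theorem PosSemidef.two_mul_apply_le_s13 [DecidableEq n] (hB : B.PosSemidef) (a b : n) :
    2 * B a b ≤ B a a + B b b := by
  have hsymm : B b a = B a b := by simpa using hB.1.apply a b
  have hquad := hB.dotProduct_mulVec_nonneg (Pi.single a 1 - Pi.single b 1)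
  simp only [star_trivial, sub_dotProduct, mulVec_sub, dotProduct_sub, mulVec_single_one,
    single_one_dotProduct, col_apply, hsymm] at hquad
  linarith

theorem PosSemidef.sum_sum_le_card_mul_sum_diag_s13 (hB : B.PosSemidef) (s : Finset n) :
    ∑ a ∈ s, ∑ b ∈ s, B a b ≤ #s * ∑ a ∈ s, B a a := by
  classical
  have hpair : 2 * ∑ a ∈ s, ∑ b ∈ s, B a b ≤ ∑ a ∈ s, ∑ b ∈ s, (B a a + B b b) := by
    simp only [mul_sum]
    exact sum_le_sum fun a _ => sum_le_sum fun b _ => hB.two_mul_apply_le_s13 a b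
  have hdiag : ∑ a ∈ s, ∑ b ∈ s, (B a a + B b b) = 2 * (#s * ∑ a ∈ s, B a a) := by
    simp only [sum_add_distrib, sum_const, nsmul_eq_mul, ← mul_sum]
    ring
  linarith

theorem sum_sum_eq_card_sub_sum_sum_compl [DecidableEq n] (hrow : ∀ a, ∑ b, B a b = 1)
    (s : Finset n) :
    ∑ a ∈ s, ∑ b ∈ s, B a b = #s - ∑ a ∈ s, ∑ b ∈ sᶜ, B a b := by
  have hsplit : ∀ a, ∑ b ∈ s, B a b = 1 - ∑ b ∈ sᶜ, B a b := fun a => by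
    rw [← hrow a, ← sum_add_sum_compl s]
    ring
  simp only [hsplit, sum_sub_distrib, sum_const, nsmul_one]

theorem PosSemidef.one_sub_sum_diag_le_div [DecidableEq n] (hB : B.PosSemidef)
    (hpos : ∀ a b, 0 ≤ B a b) (hrow : ∀ a, ∑ b, B a b = 1) {s : Finset n} {m : ℝ}
    (hm : 0 < m) (hms : m ≤ #s) :
    1 - ∑ a ∈ s, B a a ≤ (∑ a ∈ s, ∑ b ∈ sᶜ, B a b) / m := by
  have hout : 0 ≤ ∑ a ∈ s, ∑ b ∈ sᶜ, B a b :=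
    sum_nonneg fun a _ => sum_nonneg fun b _ => hpos a b
  have hblock := hB.sum_sum_le_card_mul_sum_diag_s13 s
  rw [sum_sum_eq_card_sub_sum_sum_compl hrow] at hblock
  rw [le_div_iff₀ hm]
  rcases le_total (1 - ∑ a ∈ s, B a a) 0 with hle | hge
  · nlinarith
  · nlinarith [mul_le_mul_of_nonneg_left hms hge]

end Matrix

theorem Finset.sum_sum_ite_ne_eq_sum_fiber {ι κ M : Type*} [Fintype ι] [DecidableEq ι]
    [Fintype κ] [DecidableEq κ] [AddCommMonoid M] (g : ι → κ) (f : ι → ι → M) :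
    ∑ a, ∑ b, (if g a ≠ g b then f a b else 0) =
      ∑ k, ∑ a ∈ {a | g a = k}, ∑ b ∈ ({b | g b = k} : Finset ι)ᶜ, f a b := by
  rw [← sum_fiberwise univ g]
  refine sum_congr rfl fun k _ => sum_congr rfl fun a ha => ?_
  rw [(mem_filter.1 ha).2, ← sum_filter, compl_filter]
  simp only [ne_comm]

/-- for B symmetric PSD with nonnegative entries and row sums 1, and a
partition with minimal group size m, (1/m)Σ_{j≠k}|B_{G_jG_k}|₁ + tr(B) − K ≥ 0. -/
theorem stmt_13 (p K : ℕ) (g : Fin p → Fin K) (hg : Function.Surjective g)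
    (m : ℕ)
    (hm : IsLeast {n : ℕ | ∃ j, n = (Finset.univ.filter (fun a => g a = j)).card} m)
    (B : Matrix (Fin p) (Fin p) ℝ)
    (hPSD : B.PosSemidef) (hpos : ∀ a b, 0 ≤ B a b) (hrow : ∀ a, ∑ b, B a b = 1) :
    0 ≤ (1 / (m : ℝ)) * (∑ a, ∑ b, if g a ≠ g b then |B a b| else 0)
        + B.trace - (K : ℝ) := by
  obtain ⟨⟨j₀, rfl⟩, hmin⟩ := hm
  have hm_pos : (0 : ℝ) < #{a | g a = j₀} := by
    obtain ⟨a, ha⟩ := hg j₀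
    exact_mod_cast card_pos.2 ⟨a, mem_filter.2 ⟨mem_univ a, ha⟩⟩
  have hblock : ∀ k, 1 - ∑ a ∈ {a | g a = k}, B a a ≤
      (∑ a ∈ {a | g a = k}, ∑ b ∈ ({b | g b = k} : Finset _)ᶜ, B a b) / #{a | g a = j₀} :=
    fun k => hPSD.one_sub_sum_diag_le_div hpos hrow hm_pos (by exact_mod_cast hmin ⟨k, rfl⟩)
  have htrace : B.trace = ∑ k, ∑ a ∈ {a | g a = k}, B a a := (sum_fiberwise univ g _).symm
  simp only [abs_of_nonneg (hpos _ _)]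
  rw [sum_sum_ite_ne_eq_sum_fiber g (B · ·), htrace, one_div_mul_eq_div, sum_div]
  have hsum := sum_le_sum fun k (_ : k ∈ univ) => hblock k
  simp only [sum_sub_distrib, sum_const, card_univ, Fintype.card_fin, nsmul_one] at hsum
  linarith
end

section
/- Consider the covariance structure of Proposition (counterexample): let m ≥ 1, p = 3m, C = diag-blocks [[α,0,0],[0,β,β−τ],[0,β−τ,β]] with 0 < τ, Γ diagonal with value γ₊ on the first m coordinates and γ₋ on the remaining 2m coordinates, Σ = A C Aᵀ + Γ with A the assignment matrix of the partition into three consecutive groups of size m. Let B* be the partnership matrix of this partition, and let B₁ be the partnership matrix of the partition obtained by merging groups 2 and 3 and splitting group 1 into two halves of size m/2 (assume m even). Then ⟨Σ, B*⟩ = γ₊ + 2γ₋ + m·tr(C) and ⟨Σ, B₁⟩ = 2γ₊ + γ₋ + m·tr(C) − mτ; consequently ⟨Σ, B₁⟩ > ⟨Σ, B*⟩ whenever τ < (γ₊ − γ₋)/m. -/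
/-!
Both partitions are coarsenings of the partition of `{0, …, 3m - 1}` into the four consecutive
blocks of sizes `m/2, m/2, m, m`, and off the diagonal `Σ` is constant on the products of these
blocks. Hence each inner product `⟨Σ, B⟩` collapses to a `4 × 4` sum weighted by block sizes,
plus the diagonal contribution, and is evaluated directly.
-/

open Matrix Finset

theorem Fin.card_filter_mem_Ico {n : ℕ} (lo hi : ℕ) (h : hi ≤ n) :
    #{a : Fin n | lo ≤ (a : ℕ) ∧ (a : ℕ) < hi} = hi - lo := by
  rw [← card_map Fin.valEmbedding, map_filter', Fin.map_valEmbedding_univ, ← Nat.card_Ico]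
  congr 1
  ext x
  simp only [mem_filter, mem_Iio, mem_Ico, Fin.valEmbedding_apply]
  constructor
  · rintro ⟨-, a, ha, rfl⟩
    exact ha
  · intro hx
    exact ⟨by omega, ⟨x, by omega⟩, hx, rfl⟩

section Blockwise

variable {ι κ R : Type*} [Fintype ι] [Fintype κ] [DecidableEq κ] [CommSemiring R]

theorem sum_comp_eq_sum_card_mul (c : ι → κ) (f : κ → R) :
    ∑ a, f (c a) = ∑ i, (#{a | c a = i} : R) * f i := by
  rw [← sum_fiberwise' univ c f]
  simp only [sum_const, nsmul_eq_mul]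

theorem sum_sum_comp_eq_sum_sum_card_mul (c : ι → κ) (F : κ → κ → R) :
    ∑ a, ∑ b, F (c a) (c b) = ∑ i, ∑ j, (#{a | c a = i} * #{a | c a = j} : R) * F i j := by
  rw [sum_comp_eq_sum_card_mul c (fun i => ∑ b, F i (c b))]
  simp_rw [sum_comp_eq_sum_card_mul c (F _), mul_sum, mul_assoc]

theorem sum_sum_mul_eq_of_blockwise [DecidableEq ι] (c : ι → κ) (F : κ → κ → R) (G : κ → R)
    {S : Matrix ι ι R} (hS : ∀ a b, S a b = F (c a) (c b) + if a = b then G (c a) else 0)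
    (W : κ → κ → R) {B : Matrix ι ι R} (hB : ∀ a b, B a b = W (c a) (c b)) :
    ∑ a, ∑ b, S a b * B a b
      = ∑ i, ∑ j, (#{a | c a = i} * #{a | c a = j} : R) * (F i j * W i j)
        + ∑ i, (#{a | c a = i} : R) * (G i * W i i) := by
  simp_rw [hS, hB, add_mul, sum_add_distrib, ite_mul, zero_mul, sum_ite_eq, mem_univ, if_true]
  rw [sum_sum_comp_eq_sum_sum_card_mul c (fun i j => F i j * W i j),
    sum_comp_eq_sum_card_mul c (fun i => G i * W i i)]

end Blockwise

def refinedBlock (k n : ℕ) : Fin 4 :=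
  if n < k then 0 else if n < 2 * k then 1 else if n < 4 * k then 2 else 3

namespace refinedBlock

theorem eq_iff {k n : ℕ} (hn : n < 6 * k) (i : Fin 4) :
    refinedBlock k n = i ↔ ![0, k, 2 * k, 4 * k] i ≤ n ∧ n < ![k, 2 * k, 4 * k, 6 * k] i := by
  unfold refinedBlock
  fin_cases i <;> split_ifs <;> simp <;> omega

theorem card_fiber (k : ℕ) (i : Fin 4) :
    #{a : Fin (3 * (k + k)) | refinedBlock k a = i} = ![k, k, 2 * k, 2 * k] i := by
  rw [filter_congr fun a _ => eq_iff (by omega) i,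
    Fin.card_filter_mem_Ico _ _ (by fin_cases i <;> simp <;> omega)]
  fin_cases i <;> simp <;> omega

theorem ite_lt_add_self {α : Type*} (k n : ℕ) (x y : α) :
    (if n < k + k then x else y) = ![x, x, y, y] (refinedBlock k n) := by
  unfold refinedBlock
  split_ifs <;> first | rfl | omega

theorem threeGroupLabel_eq (k n : ℕ) :
    (if n < k + k then 0 else if n < 2 * (k + k) then 1 else 2 : Fin 3)
      = ![0, 0, 1, 2] (refinedBlock k n) := by
  unfold refinedBlock
  split_ifs <;> first | rfl | omega

theorem splitGroupLabel_eq (k n : ℕ) :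
    (if n < (k + k) / 2 then 0 else if n < k + k then 1 else 2 : Fin 3)
      = ![0, 1, 2, 2] (refinedBlock k n) := by
  unfold refinedBlock
  split_ifs <;> first | rfl | omega

end refinedBlock

theorem stmt_14_general (m : ℕ) (hm : 0 < m) (hme : Even m)
    (α β τ γp γm : ℝ)
    (C : Matrix (Fin 3) (Fin 3) ℝ)
    (hC : C = !![α, 0, 0; 0, β, β - τ; 0, β - τ, β])
    (g : Fin (3 * m) → Fin 3)
    (hg : ∀ a, g a = if (a : ℕ) < m then 0 else if (a : ℕ) < 2 * m then 1 else 2)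
    (S : Matrix (Fin (3 * m)) (Fin (3 * m)) ℝ)
    (hS : ∀ a b, S a b
      = C (g a) (g b) + (if a = b then (if (a : ℕ) < m then γp else γm) else 0))
    (Bstar B1 : Matrix (Fin (3 * m)) (Fin (3 * m)) ℝ)
    (hBstar : ∀ a b, Bstar a b = if g a = g b then ((m : ℝ))⁻¹ else 0)
    (g1 : Fin (3 * m) → Fin 3)
    (hg1 : ∀ a, g1 a = if (a : ℕ) < m / 2 then 0 else if (a : ℕ) < m then 1 else 2)
    (hB1 : ∀ a b, B1 a b
      = if g1 a = g1 b then
          (if (a : ℕ) < m then 2 / (m : ℝ) else 1 / (2 * (m : ℝ))) else 0) :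
    (∑ a, ∑ b, S a b * Bstar a b = γp + 2 * γm + (m : ℝ) * C.trace) ∧
    (∑ a, ∑ b, S a b * B1 a b = 2 * γp + γm + (m : ℝ) * C.trace - (m : ℝ) * τ) ∧
    (τ < (γp - γm) / (m : ℝ) →
      ∑ a, ∑ b, S a b * Bstar a b < ∑ a, ∑ b, S a b * B1 a b) := by
  obtain ⟨k, rfl⟩ := hme
  have hk : (0 : ℝ) < k := by exact_mod_cast (show 0 < k by omega)
  simp only [refinedBlock.threeGroupLabel_eq] at hg
  simp only [refinedBlock.splitGroupLabel_eq] at hg1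
  simp only [hg, refinedBlock.ite_lt_add_self] at hS hBstar
  simp only [hg1, refinedBlock.ite_lt_add_self] at hB1
  have blockwise := sum_sum_mul_eq_of_blockwise (fun a : Fin (3 * (k + k)) => refinedBlock k a)
    (fun i j => C (![0, 0, 1, 2] i) (![0, 0, 1, 2] j)) ![γp, γp, γm, γm] hS
  obtain ⟨hstar, hone⟩ :
      ∑ a, ∑ b, S a b * Bstar a b = γp + 2 * γm + ((k + k : ℕ) : ℝ) * C.trace ∧
      ∑ a, ∑ b, S a b * B1 a b
        = 2 * γp + γm + ((k + k : ℕ) : ℝ) * C.trace - ((k + k : ℕ) : ℝ) * τ := by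
    rw [blockwise (fun i j => if ![0, 0, 1, 2] i = ![0, 0, 1, 2] j then ((k + k : ℕ) : ℝ)⁻¹ else 0)
        hBstar,
      blockwise (fun i j => if ![0, 1, 2, 2] i = ![0, 1, 2, 2] j then
        ![2 / ((k + k : ℕ) : ℝ), 2 / ((k + k : ℕ) : ℝ), 1 / (2 * ((k + k : ℕ) : ℝ)),
          1 / (2 * ((k + k : ℕ) : ℝ))] i else 0) hB1]
    constructor <;>
    · simp only [Fin.sum_univ_four, refinedBlock.card_fiber, hC, trace_fin_three, of_apply,
        cons_val', cons_val_zero, cons_val_one, Matrix.cons_val, cons_val_fin_one, Fin.reduceEq,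
        reduceIte, Fin.isValue, Nat.cast_add, Nat.cast_mul, Nat.cast_ofNat, mul_ite, mul_zero,
        add_zero, zero_add]
      field_simp
      ring
  refine ⟨hstar, hone, fun hlt => ?_⟩
  have hgap : ((k + k : ℕ) : ℝ) * τ < γp - γm := by rwa [lt_div_iff₀ (by positivity), mul_comm] at hlt
  rw [hstar, hone]
  linarith

/-- the K-means counterexample. With three groups of size m, C as below and
Γ taking value γ₊ on group 1 and γ₋ on groups 2,3, the population K-means objective
satisfies ⟨Σ, B*⟩ = γ₊ + 2γ₋ + m·tr(C), ⟨Σ, B₁⟩ = 2γ₊ + γ₋ + m·tr(C) − mτ, so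
⟨Σ, B₁⟩ > ⟨Σ, B*⟩ whenever τ < (γ₊ − γ₋)/m. -/
theorem stmt_14 (m : ℕ) (hm : 0 < m) (hme : Even m)
    (α β τ γp γm : ℝ) (hτ : 0 < τ)
    (C : Matrix (Fin 3) (Fin 3) ℝ)
    (hC : C = !![α, 0, 0; 0, β, β - τ; 0, β - τ, β])
    (g : Fin (3 * m) → Fin 3)
    (hg : ∀ a, g a = if (a : ℕ) < m then 0 else if (a : ℕ) < 2 * m then 1 else 2)
    (S : Matrix (Fin (3 * m)) (Fin (3 * m)) ℝ)
    (hS : ∀ a b, S a b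
      = C (g a) (g b) + (if a = b then (if (a : ℕ) < m then γp else γm) else 0))
    (Bstar B1 : Matrix (Fin (3 * m)) (Fin (3 * m)) ℝ)
    (hBstar : ∀ a b, Bstar a b = if g a = g b then ((m : ℝ))⁻¹ else 0)
    (g1 : Fin (3 * m) → Fin 3)
    (hg1 : ∀ a, g1 a = if (a : ℕ) < m / 2 then 0 else if (a : ℕ) < m then 1 else 2)
    (hB1 : ∀ a b, B1 a b
      = if g1 a = g1 b then
          (if (a : ℕ) < m then 2 / (m : ℝ) else 1 / (2 * (m : ℝ))) else 0) :
    (∑ a, ∑ b, S a b * Bstar a b = γp + 2 * γm + (m : ℝ) * C.trace) ∧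
    (∑ a, ∑ b, S a b * B1 a b = 2 * γp + γm + (m : ℝ) * C.trace - (m : ℝ) * τ) ∧
    (τ < (γp - γm) / (m : ℝ) →
      ∑ a, ∑ b, S a b * Bstar a b < ∑ a, ∑ b, S a b * B1 a b) :=
  stmt_14_general m hm hme α β τ γp γm C hC g hg S hS Bstar B1 hBstar g1 hg1 hB1
end

section
/- Let Σ = A C Aᵀ + Γ with A the assignment matrix of a partition G, C symmetric, Γ diagonal. For the two metrics Δ(C) = min_{j<k}(C_{jj}+C_{kk}−2C_{jk}) and MCORD(Σ) = min over pairs a,b in different groups of max_{c ≠ a,b} |Σ_{ac} − Σ_{bc}|, if every group has size at least 2 then Δ(C) ≤ 2·MCORD(Σ) ≤ 2 √(Δ(C)) · max_k √(C_{kk}), provided C is positive semidefinite. -/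
/-!
For `a, b` in groups `j ≠ k` and `c ≠ a, b`, `Σ_ac - Σ_bc = C_{j,g c} - C_{k,g c}`.
Taking `c` in the group of `a` and then in the group of `b` gives two such differences summing
to `C_jj + C_kk - 2 C_jk`, whence `Δ ≤ 2 MCORD`. Conversely `C_{jm} - C_{km} = (e_j - e_k)ᵀ C e_m`,
so Cauchy–Schwarz for the semi-inner product `xᵀ C y` bounds every such difference by
`√(C_jj + C_kk - 2 C_jk) · √C_mm`; applied to a pair of groups realising `Δ` this gives the
upper bound.
-/

open Matrix Finset

namespace Matrix.PosSemidef

variable {n : Type*} [Fintype n] {C : Matrix n n ℝ}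

theorem dotProduct_mulVec_sq_le (hC : C.PosSemidef) (x y : n → ℝ) :
    (x ⬝ᵥ C *ᵥ y) ^ 2 ≤ (x ⬝ᵥ C *ᵥ x) * (y ⬝ᵥ C *ᵥ y) := by
  let _ := C.toSeminormedAddCommGroup hC
  let _ := C.toInnerProductSpace hC
  have hinner : ∀ u v : n → ℝ, inner ℝ u v = u ⬝ᵥ C *ᵥ v := fun u v => by
    change (C *ᵥ v) ⬝ᵥ star u = _
    simp [dotProduct_comm]
  simpa only [hinner, sq] using real_inner_mul_inner_self_le x y

theorem abs_sub_le_sqrt_mul_sqrt [DecidableEq n] (hC : C.PosSemidef) (j k m : n) :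
    |C j m - C k m| ≤ √(C j j + C k k - 2 * C j k) * √(C m m) := by
  have hsymm : C k j = C j k := (isHermitian_iff_isSymm.mp hC.1).apply j k
  have h := hC.dotProduct_mulVec_sq_le (Pi.single j 1 - Pi.single k 1) (Pi.single m 1)
  simp only [mulVec_sub, mulVec_single_one, sub_dotProduct, dotProduct_sub, single_one_dotProduct,
    col_apply, hsymm] at h
  rw [← Real.sqrt_mul' _ (hC.diag_nonneg (i := m))]
  exact Real.abs_le_sqrt (by linarith)

end Matrix.PosSemidef

theorem exists_ne_of_two_le_card_filter {ι κ : Type*} [Fintype ι] [DecidableEq κ] {g : ι → κ}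
    {j : κ} (h : 2 ≤ #(univ.filter fun a => g a = j)) (a : ι) : ∃ c, g c = j ∧ c ≠ a := by
  obtain ⟨c, hc, hca⟩ := exists_mem_ne h a
  exact ⟨c, (mem_filter.mp hc).2, hca⟩

section BlockCovariance

variable {ι κ : Type*} {g : ι → κ} {S : Matrix ι ι ℝ} {C : Matrix κ κ ℝ}

theorem sub_block_apply (hblock : ∀ a c, a ≠ c → S a c = C (g a) (g c)) {a b c : ι}
    (hca : c ≠ a) (hcb : c ≠ b) : S a c - S b c = C (g a) (g c) - C (g b) (g c) := by
  rw [hblock a c hca.symm, hblock b c hcb.symm]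

theorem diag_add_diag_sub_two_mul_le_two_mul (hC : C.IsSymm)
    (hblock : ∀ a c, a ≠ c → S a c = C (g a) (g c)) {a b c₁ c₂ : ι} (hab : g a ≠ g b)
    (hc₁ : g c₁ = g a) (hc₁a : c₁ ≠ a) (hc₂ : g c₂ = g b) (hc₂b : c₂ ≠ b) {x : ℝ}
    (hx : x ∈ upperBounds {y | ∃ c, c ≠ a ∧ c ≠ b ∧ y = |S a c - S b c|}) :
    C (g a) (g a) + C (g b) (g b) - 2 * C (g a) (g b) ≤ 2 * x := by
  have hc₁b : c₁ ≠ b := fun h => hab (h ▸ hc₁).symm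
  have hc₂a : c₂ ≠ a := fun h => hab (h ▸ hc₂)
  have h₁ := hx ⟨c₁, hc₁a, hc₁b, rfl⟩
  have h₂ := hx ⟨c₂, hc₂a, hc₂b, rfl⟩
  rw [sub_block_apply hblock hc₁a hc₁b, hc₁, hC.apply (g a) (g b)] at h₁
  rw [sub_block_apply hblock hc₂a hc₂b, hc₂] at h₂
  linarith [le_abs_self (C (g a) (g a) - C (g a) (g b)),
    neg_abs_le (C (g a) (g b) - C (g b) (g b))]

theorem exists_isGreatest_abs_sub [Finite ι] (S : Matrix ι ι ℝ) {a b c₀ : ι} (hc₀a : c₀ ≠ a)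
    (hc₀b : c₀ ≠ b) : ∃ x, IsGreatest {y | ∃ c, c ≠ a ∧ c ≠ b ∧ y = |S a c - S b c|} x := by
  obtain ⟨c, ⟨hca, hcb⟩, hmax⟩ :=
    Set.exists_max_image {c | c ≠ a ∧ c ≠ b} (fun c => |S a c - S b c|) (Set.toFinite _)
      ⟨c₀, hc₀a, hc₀b⟩
  exact ⟨_, ⟨c, hca, hcb, rfl⟩, fun _ ⟨c', hc'a, hc'b, hy⟩ => hy ▸ hmax c' ⟨hc'a, hc'b⟩⟩

end BlockCovariance

/-- for a G-block covariance Σ = A C Aᵀ + Γ with C PSD and all groups of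
size at least 2, the two separation metrics satisfy
Δ(C) ≤ 2·MCORD(Σ) ≤ 2·√(Δ(C))·max_k √(C_kk). -/
theorem stmt_17 (p K : ℕ) (g : Fin p → Fin K)
    (hsize : ∀ j : Fin K, 2 ≤ (Finset.univ.filter (fun a => g a = j)).card)
    (C : Matrix (Fin K) (Fin K) ℝ) (hC : C.PosSemidef)
    (S : Matrix (Fin p) (Fin p) ℝ)
    (hblock : ∀ a c : Fin p, a ≠ c → S a c = C (g a) (g c))
    (Δ M Cmax : ℝ)
    (hΔ : IsLeast {x : ℝ | ∃ j k : Fin K, j ≠ k ∧ x = C j j + C k k - 2 * C j k} Δ)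
    (hM : IsLeast {x : ℝ | ∃ a b : Fin p, g a ≠ g b ∧
            IsGreatest {y : ℝ | ∃ c : Fin p, c ≠ a ∧ c ≠ b ∧ y = |S a c - S b c|} x} M)
    (hCmax : IsGreatest {x : ℝ | ∃ k : Fin K, x = Real.sqrt (C k k)} Cmax) :
    Δ ≤ 2 * M ∧ 2 * M ≤ 2 * Real.sqrt Δ * Cmax := by
  have hpick j := exists_ne_of_two_le_card_filter (hsize j)
  have hsurj j : ∃ a, g a = j :=
    (filter_nonempty_iff.mp (card_pos.mp (zero_lt_two.trans_le (hsize j)))).imp fun _ => And.right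
  constructor
  · obtain ⟨a, b, hab, hM⟩ := hM.1
    obtain ⟨c₁, hc₁, hc₁a⟩ := hpick (g a) a
    obtain ⟨c₂, hc₂, hc₂b⟩ := hpick (g b) b
    exact (hΔ.2 ⟨g a, g b, hab, rfl⟩).trans <| diag_add_diag_sub_two_mul_le_two_mul
      (isHermitian_iff_isSymm.mp hC.1) hblock hab hc₁ hc₁a hc₂ hc₂b hM.2
  · obtain ⟨j, k, hjk, rfl⟩ := hΔ.1
    obtain ⟨a, rfl⟩ := hsurj j
    obtain ⟨b, rfl⟩ := hsurj k
    obtain ⟨c₀, hc₀, hc₀a⟩ := hpick (g a) a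
    obtain ⟨x, hx⟩ := exists_isGreatest_abs_sub S hc₀a fun h => hjk (h ▸ hc₀).symm
    obtain ⟨c, hca, hcb, rfl⟩ := hx.1
    calc 2 * M ≤ 2 * |S a c - S b c| := by gcongr; exact hM.2 ⟨a, b, hjk, hx⟩
      _ = 2 * |C (g a) (g c) - C (g b) (g c)| := by rw [sub_block_apply hblock hca hcb]
      _ ≤ 2 * (√(C (g a) (g a) + C (g b) (g b) - 2 * C (g a) (g b)) * √(C (g c) (g c))) := by
        gcongr; exact hC.abs_sub_le_sqrt_mul_sqrt _ _ _
      _ ≤ _ := by rw [← mul_assoc]; gcongr; exact hCmax.2 ⟨g c, rfl⟩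
end
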